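/- Let P₁,…,P_k ⊂ ℝ^n be compact convex sets with nonempty interior such that 0 lies in the interior of the Minkowski sum P₁+⋯+P_k. Then the smooth strictly convex function G(W) = Σ_{α=1}^k log ∫_{P_α} e^{⟨W,p⟩} dp is proper (G(W) → +∞ as |W| → ∞), and consequently there exists a unique W ∈ ℝ^n such that Σ_{α=1}^k 𝒜_{P_α}(W) = 0. -/

import Mathlib

open MeasureTheory

/-- the weighted barycenter
`𝒜_P(W) = (∫_P p e^{⟨W,p⟩} dp)/(∫_P e^{⟨W,p⟩} dp)` of a convex body
`P ⊂ ℝ^n`, the integrals being taken with respect to Lebesgue measure. -/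
noncomputable def wBary {n : ℕ} (P : Set (EuclideanSpace ℝ (Fin n)))
    (W : EuclideanSpace ℝ (Fin n)) : EuclideanSpace ℝ (Fin n) :=
  (∫ p in P, Real.exp (inner ℝ W p : ℝ))⁻¹ •
    ∫ p in P, Real.exp (inner ℝ W p : ℝ) • p

/-- the Minkowski sum `P₁ + ⋯ + P_k` of subsets of `ℝ^n` -/
def minkSum {n k : ℕ} (P : Fin k → Set (EuclideanSpace ℝ (Fin n))) :
    Set (EuclideanSpace ℝ (Fin n)) :=
  {p | ∃ q : Fin k → EuclideanSpace ℝ (Fin n), (∀ α, q α ∈ P α) ∧ p = ∑ α, q α}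

/-!
Write `logMGF P W = log ∫_P exp ⟪W, p⟫ dp`. Its gradient is the barycenter `𝒜_P(W)`, so the
critical points of `G = ∑ α, logMGF P_α` are the solutions of `∑ α, 𝒜_{P_α}(W) = 0`.

Each `logMGF P` is strictly convex: for the probability densities
`f_W = exp (⟪W, ·⟫ - logMGF P W)` on `P`, convexity of `exp` gives
`exp (⟪a X + b Y, ·⟫ - a logMGF P X - b logMGF P Y) ≤ a f_X + b f_Y`, strictly off a hyperplane,
which is null; integrating gives `logMGF P (a X + b Y) < a logMGF P X + b logMGF P Y`.

`G` is proper: shrinking a ball `B(z, r) ⊆ P` towards any `q ∈ P` by a fixed factor keeps it in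
the convex set `P`, so `logMGF P W ≥ ⟪W, q⟫ - δ ‖W‖ - C_δ` uniformly in `q ∈ P`. Writing
`(ε / 2) W / ‖W‖ = ∑ α, q_α` with `q_α ∈ P_α` then gives `G W ≥ (ε / 4) ‖W‖ - C`.

A proper, strictly convex, differentiable function has exactly one critical point, its minimum.
-/

section

open Metric Filter Set
open scoped RealInnerProductSpace

lemma StrictConvexOn.fun_sum {F ι : Type*} [AddCommMonoid F] [Module ℝ F] {S : Set F}
    {s : Finset ι} (hs : s.Nonempty) {f : ι → F → ℝ} (hf : ∀ i ∈ s, StrictConvexOn ℝ S (f i)) :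
    StrictConvexOn ℝ S (fun x ↦ ∑ i ∈ s, f i x) := by
  refine ⟨(hf _ hs.choose_spec).1, fun x hx y hy hxy a b ha hb hab ↦ ?_⟩
  calc ∑ i ∈ s, f i (a • x + b • y) < ∑ i ∈ s, (a • f i x + b • f i y) :=
        Finset.sum_lt_sum_of_nonempty hs fun i hi ↦ (hf i hi).2 hx hy hxy ha hb hab
    _ = a • ∑ i ∈ s, f i x + b • ∑ i ∈ s, f i y := by
        rw [Finset.sum_add_distrib, Finset.smul_sum, Finset.smul_sum]

lemma ConvexOn.isMinOn_iff_hasFDerivAt_eq_zero {F : Type*} [NormedAddCommGroup F]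
    [NormedSpace ℝ F] {f : F → ℝ} {f' : F →L[ℝ] ℝ} {x : F} (hf : ConvexOn ℝ univ f)
    (hx : HasFDerivAt f f' x) : IsMinOn f univ x ↔ f' = 0 := by
  refine ⟨fun h ↦ (h.isLocalMin univ_mem).hasFDerivAt_eq_zero hx, fun h y _ ↦ ?_⟩
  let line : ℝ →ᵃ[ℝ] F := AffineMap.lineMap x y
  have hline : HasDerivAt (f ∘ line) 0 0 := by
    have := (AffineMap.lineMap_apply_zero x y (k := ℝ) ▸ hx).comp_hasDerivAt (0 : ℝ)
      AffineMap.hasDerivAt_lineMap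
    rwa [h, zero_apply] at this
  simpa [line, slope_def_field] using (hf.comp_affineMap line).le_slope_of_hasDerivAt
    (mem_univ 0) (mem_univ 1) zero_lt_one hline

lemma StrictConvexOn.existsUnique_hasFDerivAt_eq_zero {F : Type*} [NormedAddCommGroup F]
    [NormedSpace ℝ F] [ProperSpace F] {f : F → ℝ} {f' : F → F →L[ℝ] ℝ}
    (hf : StrictConvexOn ℝ univ f) (hf' : ∀ x, HasFDerivAt f (f' x) x)
    (hlim : Tendsto f (cocompact F) atTop) : ∃! x, f' x = 0 := by
  have hmin (x : F) := hf.convexOn.isMinOn_iff_hasFDerivAt_eq_zero (hf' x)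
  have hcont : Continuous f := continuous_iff_continuousAt.2 fun x ↦ (hf' x).continuousAt
  obtain ⟨x₀, hle⟩ := hcont.exists_forall_le hlim
  have hx₀ : IsMinOn f univ x₀ := fun x _ ↦ hle x
  exact ⟨x₀, (hmin x₀).1 hx₀, fun x hx ↦
    hf.eq_of_isMinOn ((hmin x).2 hx) hx₀ (mem_univ x) (mem_univ x₀)⟩

lemma Convex.ball_add_smul_sub_subset {F : Type*} [NormedAddCommGroup F] [NormedSpace ℝ F]
    {P : Set F} (hP : Convex ℝ P) {q z : F} {r t : ℝ} (hq : q ∈ P)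
    (hz : ball z r ⊆ P) (ht₀ : 0 < t) (ht₁ : t ≤ 1) : ball (q + t • (z - q)) (t * r) ⊆ P := by
  intro w hw
  set v := z + t⁻¹ • (w - (q + t • (z - q)))
  have hv : v ∈ ball z r := by
    rw [mem_ball_iff_norm, add_sub_cancel_left, norm_smul, Real.norm_of_nonneg (inv_pos.2 ht₀).le,
      inv_mul_lt_iff₀ ht₀]
    exact mem_ball_iff_norm.1 hw
  convert hP.add_smul_sub_mem hq (hz hv) ⟨ht₀.le, ht₁⟩ using 1
  rw [show v - q = (z - q) + t⁻¹ • (w - (q + t • (z - q))) by simp only [v]; abel, smul_add,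
    smul_inv_smul₀ ht₀.ne']
  abel

variable {E : Type*} [NormedAddCommGroup E] [InnerProductSpace ℝ E] [MeasurableSpace E]
  [BorelSpace E]

noncomputable def logMGF (μ : Measure E) (P : Set E) (W : E) : ℝ :=
  Real.log (∫ p in P, Real.exp ⟪W, p⟫ ∂μ)

variable {μ : Measure E} {P : Set E}

lemma integrableOn_exp_inner [IsFiniteMeasureOnCompacts μ] (hP : IsCompact P) (W : E) :
    IntegrableOn (fun p ↦ Real.exp ⟪W, p⟫) P μ :=
  (by fun_prop : Continuous fun p ↦ Real.exp ⟪W, p⟫).continuousOn.integrableOn_compact hP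

lemma integrableOn_exp_inner_smul [IsFiniteMeasureOnCompacts μ] (hP : IsCompact P) (W : E) :
    IntegrableOn (fun p ↦ Real.exp ⟪W, p⟫ • p) P μ :=
  (by fun_prop : Continuous fun p ↦ Real.exp ⟪W, p⟫ • p).continuousOn.integrableOn_compact hP

lemma integral_exp_inner_pos [IsFiniteMeasureOnCompacts μ] [μ.IsOpenPosMeasure]
    (hPc : IsCompact P) (hPi : (interior P).Nonempty) (W : E) :
    0 < ∫ p in P, Real.exp ⟪W, p⟫ ∂μ := by
  rw [setIntegral_pos_iff_support_of_nonneg_ae (.of_forall fun _ ↦ (Real.exp_pos _).le)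
    (integrableOn_exp_inner hPc W)]
  simpa [Function.support, (Real.exp_pos _).ne'] using μ.measure_pos_of_nonempty_interior hPi

lemma hasFDerivAt_integral_exp_inner [CompleteSpace E] [IsFiniteMeasureOnCompacts μ]
    (hP : IsCompact P) (W : E) :
    HasFDerivAt (fun W ↦ ∫ p in P, Real.exp ⟪W, p⟫ ∂μ)
      (innerSL ℝ (∫ p in P, Real.exp ⟪W, p⟫ • p ∂μ)) W := by
  obtain ⟨R, hR⟩ := hP.isBounded.exists_norm_le
  have hderiv (p x : E) : HasFDerivAt (fun W ↦ Real.exp ⟪W, p⟫)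
      (innerSL ℝ (Real.exp ⟪x, p⟫ • p)) x := by
    convert ((innerSL ℝ p).hasFDerivAt (x := x)).exp using 1
    · ext W; simp [real_inner_comm]
    · ext v; simp [real_inner_comm p x, mul_comm]
  rw [← (innerSL ℝ).integral_comp_comm (integrableOn_exp_inner_smul hP W)]
  refine hasFDerivAt_integral_of_dominated_of_fderiv_le (ball_mem_nhds W one_pos)
    (bound := fun _ ↦ Real.exp ((‖W‖ + 1) * R) * R)
    (.of_forall fun x ↦ (integrableOn_exp_inner hP x).aestronglyMeasurable)
    (integrableOn_exp_inner hP W)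
    ((innerSL ℝ).integrable_comp (integrableOn_exp_inner_smul hP W)).aestronglyMeasurable ?_
    (integrableOn_const hP.measure_lt_top.ne)
    (.of_forall fun p x _ ↦ hderiv p x)
  filter_upwards [ae_restrict_mem hP.measurableSet] with p hp x hx
  have hxW : ‖x‖ ≤ ‖W‖ + 1 := by
    linarith [norm_le_norm_add_norm_sub' x W, (mem_ball_iff_norm.1 hx).le]
  have hpR : ‖p‖ ≤ R := hR p hp
  rw [innerSL_apply_norm, norm_smul, Real.norm_of_nonneg (Real.exp_pos _).le]
  gcongr
  exact (real_inner_le_norm x p).trans (mul_le_mul hxW hpR (norm_nonneg p) (by positivity))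

lemma hasFDerivAt_logMGF [CompleteSpace E] [IsFiniteMeasureOnCompacts μ] [μ.IsOpenPosMeasure]
    (hPc : IsCompact P) (hPi : (interior P).Nonempty) (W : E) :
    HasFDerivAt (logMGF μ P) (innerSL ℝ ((∫ p in P, Real.exp ⟪W, p⟫ ∂μ)⁻¹ •
      ∫ p in P, Real.exp ⟪W, p⟫ • p ∂μ)) W := by
  rw [map_smul]
  exact (hasFDerivAt_integral_exp_inner hPc W).log (integral_exp_inner_pos hPc hPi W).ne'

lemma addHaar_setOf_inner_eq [FiniteDimensional ℝ E] [μ.IsAddHaarMeasure] {d : E} (hd : d ≠ 0)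
    (c : ℝ) : μ {p | ⟪d, p⟫ = c} = 0 := by
  let H : AffineSubspace ℝ E := (AffineSubspace.mk' c ⊥).comap (innerₛₗ ℝ d).toAffineMap
  have hH : (H : Set E) = {p | ⟪d, p⟫ = c} := by ext; simp [H, sub_eq_zero]
  refine hH ▸ μ.addHaar_affineSubspace H fun htop ↦ hd ?_
  have h0 : (0 : E) ∈ H := htop ▸ AffineSubspace.mem_top ℝ E 0
  have hd' : d ∈ H := htop ▸ AffineSubspace.mem_top ℝ E d
  simp only [← SetLike.mem_coe, hH, mem_ofPred_eq, inner_zero_right] at h0 hd'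
  simpa [← h0] using hd'

lemma restrict_setOf_inner_ne_pos [FiniteDimensional ℝ E] [μ.IsAddHaarMeasure]
    (hPi : (interior P).Nonempty) {d : E} (hd : d ≠ 0) (c : ℝ) :
    0 < μ.restrict P {p | ⟪d, p⟫ ≠ c} := by
  have hP : μ (P \ {p | ⟪d, p⟫ = c}) = μ P := measure_sdiff_null (addHaar_setOf_inner_eq hd c)
  refine lt_of_lt_of_le ?_ (Measure.le_restrict_apply _ _)
  rw [show {p | ⟪d, p⟫ ≠ c} ∩ P = P \ {p | ⟪d, p⟫ = c} by ext; simp [and_comm], hP]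
  exact μ.measure_pos_of_nonempty_interior hPi

lemma strictConvexOn_logMGF [FiniteDimensional ℝ E] [μ.IsAddHaarMeasure]
    (hPc : IsCompact P) (hPi : (interior P).Nonempty) :
    StrictConvexOn ℝ univ (logMGF μ P) := by
  refine ⟨convex_univ, fun x _ y _ hxy a b ha hb hab ↦ ?_⟩
  set L := logMGF μ P with hL
  set K := a * L x + b * L y with hK
  have hZ := integral_exp_inner_pos (μ := μ) hPc hPi
  let f (W p : E) : ℝ := Real.exp (⟪W, p⟫ - L W)
  have hf (W : E) : f W = fun p ↦ Real.exp ⟪W, p⟫ / Real.exp (L W) := by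
    ext p; exact Real.exp_sub _ _
  have hf_int (W : E) : IntegrableOn (f W) P μ := hf W ▸ (integrableOn_exp_inner hPc W).div_const _
  have hf_one (W : E) : ∫ p in P, f W p ∂μ = 1 := by
    rw [hf, integral_div, hL, logMGF, Real.exp_log (hZ W), div_self (hZ W).ne']
  have hmix (p : E) : Real.exp (⟪a • x + b • y, p⟫ - K) =
      Real.exp (a * (⟪x, p⟫ - L x) + b * (⟪y, p⟫ - L y)) := by
    rw [inner_add_left, real_inner_smul_left, real_inner_smul_left, hK]; ring_nf
  have hle (p : E) : Real.exp (⟪a • x + b • y, p⟫ - K) ≤ a * f x p + b * f y p :=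
    hmix p ▸ convexOn_exp.2 (mem_univ _) (mem_univ _) ha.le hb.le hab
  have hlt (p : E) (hp : ⟪x - y, p⟫ ≠ L x - L y) :
      Real.exp (⟪a • x + b • y, p⟫ - K) < a * f x p + b * f y p := by
    refine hmix p ▸ strictConvexOn_exp.2 (mem_univ _) (mem_univ _) ?_ ha hb hab
    contrapose! hp; rw [inner_sub_left]; linarith
  have hexp_sub : (fun p ↦ Real.exp (⟪a • x + b • y, p⟫ - K)) =
      fun p ↦ Real.exp ⟪a • x + b • y, p⟫ / Real.exp K := funext fun _ ↦ Real.exp_sub _ _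
  have hint : IntegrableOn (fun p ↦ a * f x p + b * f y p) P μ :=
    ((hf_int x).const_mul a).add ((hf_int y).const_mul b)
  have hint' : IntegrableOn (fun p ↦ Real.exp (⟪a • x + b • y, p⟫ - K)) P μ :=
    hexp_sub ▸ (integrableOn_exp_inner hPc _).div_const _
  have key : ∫ p in P, Real.exp (⟪a • x + b • y, p⟫ - K) ∂μ < 1 := calc
    _ < ∫ p in P, (a * f x p + b * f y p) ∂μ := by
      rw [← sub_pos, ← integral_sub hint hint']
      refine (integral_pos_iff_support_of_nonneg_ae
        (ae_of_all _ fun p ↦ sub_nonneg.2 (hle p)) (hint.sub hint')).2 ?_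
      exact (restrict_setOf_inner_ne_pos hPi (sub_ne_zero.2 hxy) (L x - L y)).trans_le
        (measure_mono fun p hp ↦ (sub_pos.2 (hlt p hp)).ne')
    _ = 1 := by
      rw [integral_add ((hf_int x).const_mul a) ((hf_int y).const_mul b), integral_const_mul,
        integral_const_mul, hf_one, hf_one, mul_one, mul_one, hab]
  rw [hexp_sub, integral_div, div_lt_one (Real.exp_pos K)] at key
  exact (Real.log_lt_iff_lt_exp (hZ _)).2 key

lemma le_logMGF_of_ball_subset [FiniteDimensional ℝ E] [μ.IsAddHaarMeasure] (hPc : IsCompact P)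
    {c : E} {ρ : ℝ} (hρ : 0 < ρ) (hball : ball c ρ ⊆ P) (W : E) :
    Real.log (μ.real (ball 0 ρ)) + ⟪W, c⟫ - ρ * ‖W‖ ≤ logMGF μ P W := by
  have hvol : 0 < μ.real (ball 0 ρ) :=
    ENNReal.toReal_pos (measure_ball_pos μ 0 hρ).ne' measure_ball_lt_top.ne
  have hlow (p : E) (hp : p ∈ ball c ρ) : ⟪W, c⟫ - ρ * ‖W‖ ≤ ⟪W, p⟫ := by
    have h := (real_inner_le_norm W (c - p)).trans
      (mul_le_mul_of_nonneg_left (mem_ball_iff_norm'.1 hp).le (norm_nonneg W))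
    rw [inner_sub_right] at h; linarith
  have key : μ.real (ball 0 ρ) * Real.exp (⟪W, c⟫ - ρ * ‖W‖) ≤ ∫ p in P, Real.exp ⟪W, p⟫ ∂μ :=
    calc μ.real (ball 0 ρ) * Real.exp (⟪W, c⟫ - ρ * ‖W‖)
        = ∫ _ in ball c ρ, Real.exp (⟪W, c⟫ - ρ * ‖W‖) ∂μ := by
          rw [setIntegral_const, smul_eq_mul, measureReal_def, measureReal_def,
            μ.addHaar_ball_center c]
      _ ≤ ∫ p in ball c ρ, Real.exp ⟪W, p⟫ ∂μ :=
          setIntegral_mono_on (integrableOn_const measure_ball_lt_top.ne)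
            ((integrableOn_exp_inner hPc W).mono_set hball) measurableSet_ball
            fun p hp ↦ Real.exp_le_exp.2 (hlow p hp)
      _ ≤ ∫ p in P, Real.exp ⟪W, p⟫ ∂μ :=
          setIntegral_mono_set (integrableOn_exp_inner hPc W)
            (.of_forall fun _ ↦ (Real.exp_pos _).le) (.of_forall hball)
  calc Real.log (μ.real (ball 0 ρ)) + ⟪W, c⟫ - ρ * ‖W‖
      = Real.log (μ.real (ball 0 ρ) * Real.exp (⟪W, c⟫ - ρ * ‖W‖)) := by
        rw [Real.log_mul hvol.ne' (Real.exp_pos _).ne', Real.log_exp, add_sub_assoc]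
    _ ≤ logMGF μ P W := Real.log_le_log (by positivity) key

lemma exists_inner_sub_le_logMGF [FiniteDimensional ℝ E] [μ.IsAddHaarMeasure] (hPc : IsCompact P)
    (hPconv : Convex ℝ P) (hPi : (interior P).Nonempty) {δ : ℝ} (hδ : 0 < δ) :
    ∃ C, ∀ W, ∀ q ∈ P, ⟪W, q⟫ - δ * ‖W‖ + C ≤ logMGF μ P W := by
  obtain ⟨z, hz⟩ := hPi
  obtain ⟨r, hr, hzr⟩ := Metric.isOpen_iff.1 isOpen_interior z hz
  obtain ⟨D, hD, hPD⟩ : ∃ D > 0, ∀ q ∈ P, ‖z - q‖ ≤ D := by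
    obtain ⟨R, hR, hPR⟩ := hPc.isBounded.exists_pos_norm_le
    exact ⟨‖z‖ + R, by positivity, fun q hq ↦ (norm_sub_le z q).trans (by linarith [hPR q hq])⟩
  set t := δ / (D + r + δ)
  have ht₀ : 0 < t := by positivity
  have ht₁ : t ≤ 1 := (div_le_one (by positivity)).2 (by linarith)
  have htδ : t * (D + r) ≤ δ := by
    rw [div_mul_eq_mul_div, div_le_iff₀ (by positivity)]; nlinarith
  refine ⟨Real.log (μ.real (ball 0 (t * r))), fun W q hq ↦ ?_⟩
  have hball := le_logMGF_of_ball_subset (μ := μ) hPc (mul_pos ht₀ hr)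
    (hPconv.ball_add_smul_sub_subset hq (hzr.trans interior_subset) ht₀ ht₁) W
  have hzq : -(D * ‖W‖) ≤ ⟪W, z - q⟫ := by
    have h := (abs_real_inner_le_norm W (z - q)).trans
      (mul_le_mul_of_nonneg_left (hPD q hq) (norm_nonneg W))
    linarith [neg_abs_le ⟪W, z - q⟫]
  rw [inner_add_right, real_inner_smul_right] at hball
  nlinarith [mul_le_mul_of_nonneg_right htδ (norm_nonneg W)]

lemma exists_add_mul_norm_le_sum_logMGF {ι : Type*} [Fintype ι] [FiniteDimensional ℝ E]
    [μ.IsAddHaarMeasure] {P : ι → Set E} (hPc : ∀ i, IsCompact (P i))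
    (hPconv : ∀ i, Convex ℝ (P i)) (hPi : ∀ i, (interior (P i)).Nonempty)
    (h0 : 0 ∈ interior {s | ∃ q : ι → E, (∀ i, q i ∈ P i) ∧ s = ∑ i, q i}) :
    ∃ C ε, 0 < ε ∧ ∀ W, C + ε * ‖W‖ ≤ ∑ i, logMGF μ (P i) W := by
  obtain ⟨ε, hε, hball⟩ := Metric.mem_nhds_iff.1 (mem_interior_iff_mem_nhds.1 h0)
  set δ := ε / (4 * (Fintype.card ι + 1))
  have hδ : Fintype.card ι * δ ≤ ε / 4 := by
    rw [mul_div_assoc', div_le_div_iff₀ (by positivity) (by norm_num)]; nlinarith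
  choose C hC using fun i ↦ exists_inner_sub_le_logMGF (μ := μ) (hPc i) (hPconv i) (hPi i)
    (δ := δ) (by positivity)
  refine ⟨∑ i, C i, ε / 4, by positivity, fun W ↦ ?_⟩
  set s := (ε / 2 * ‖W‖⁻¹) • W
  have hs : s ∈ ball 0 ε := by
    rw [mem_ball_zero_iff, norm_smul, Real.norm_of_nonneg (by positivity), mul_assoc]
    nlinarith [inv_mul_le_one (a := ‖W‖)]
  have hWs : ⟪W, s⟫ = ε / 2 * ‖W‖ := by
    rw [real_inner_smul_right, real_inner_self_eq_norm_sq]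
    rcases eq_or_ne ‖W‖ 0 with hW | hW
    · simp [hW]
    · field_simp
  obtain ⟨q, hq, hsq⟩ := hball hs
  calc ∑ i, C i + ε / 4 * ‖W‖ ≤ ∑ i, (⟪W, q i⟫ - δ * ‖W‖ + C i) := by
        rw [Finset.sum_add_distrib, Finset.sum_sub_distrib, ← inner_sum, ← hsq, hWs,
          Finset.sum_const, Finset.card_univ, nsmul_eq_mul]
        nlinarith [mul_le_mul_of_nonneg_right hδ (norm_nonneg W)]
    _ ≤ ∑ i, logMGF μ (P i) W := Finset.sum_le_sum fun i _ ↦ hC i W (q i) (hq i)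

lemma tendsto_sum_logMGF_cobounded {ι : Type*} [Fintype ι] [FiniteDimensional ℝ E]
    [μ.IsAddHaarMeasure] {P : ι → Set E} (hPc : ∀ i, IsCompact (P i))
    (hPconv : ∀ i, Convex ℝ (P i)) (hPi : ∀ i, (interior (P i)).Nonempty)
    (h0 : 0 ∈ interior {s | ∃ q : ι → E, (∀ i, q i ∈ P i) ∧ s = ∑ i, q i}) :
    Tendsto (fun W ↦ ∑ i, logMGF μ (P i) W) (Bornology.cobounded E) atTop := by
  obtain ⟨C, ε, hε, hCε⟩ := exists_add_mul_norm_le_sum_logMGF (μ := μ) hPc hPconv hPi h0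
  exact tendsto_atTop_mono hCε
    (tendsto_atTop_add_const_left _ C (tendsto_norm_cobounded_atTop.const_mul_atTop hε))

end

/-- Let `P₁, …, P_k ⊂ ℝ^n` be compact convex sets with nonempty interior such
that `0` lies in the interior of the Minkowski sum `P₁ + ⋯ + P_k`. Then the
smooth strictly convex function `G(W) = Σ_α log ∫_{P_α} e^{⟨W,p⟩} dp` is
proper (`G(W) → +∞` as `|W| → ∞`), and consequently there exists a unique
`W ∈ ℝ^n` such that `Σ_α 𝒜_{P_α}(W) = 0`. -/
theorem sum_logMomentGeneratingFn_proper_and_unique_critical_point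
    {n k : ℕ} (hk : 0 < k)
    (P : Fin k → Set (EuclideanSpace ℝ (Fin n)))
    (hPc : ∀ α, IsCompact (P α)) (hPconv : ∀ α, Convex ℝ (P α))
    (hPint : ∀ α, (interior (P α)).Nonempty)
    (h0 : 0 ∈ interior (minkSum P)) :
    Filter.Tendsto (fun W : EuclideanSpace ℝ (Fin n) =>
        ∑ α, Real.log (∫ p in P α, Real.exp (inner ℝ W p : ℝ)))
      (Filter.comap norm Filter.atTop) Filter.atTop ∧
    ∃! W : EuclideanSpace ℝ (Fin n), ∑ α, wBary (P α) W = 0 := by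
  have hgrad (W : EuclideanSpace ℝ (Fin n)) := HasFDerivAt.fun_sum (u := Finset.univ)
    fun α _ ↦ hasFDerivAt_logMGF (μ := volume) (hPc α) (hPint α) W
  have hlim := tendsto_sum_logMGF_cobounded (μ := volume) hPc hPconv hPint h0
  refine ⟨by rwa [comap_norm_atTop], ?_⟩
  have hconv := StrictConvexOn.fun_sum (Finset.univ_nonempty_iff.2 ⟨⟨0, hk⟩⟩)
    fun α _ ↦ strictConvexOn_logMGF (μ := volume) (hPc α) (hPint α)
  simpa only [wBary, ← map_sum, ← map_zero (innerSL ℝ), innerSL_inj] using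
    hconv.existsUnique_hasFDerivAt_eq_zero hgrad (by rwa [← Metric.cobounded_eq_cocompact])
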